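/- The Hamming graph H(n1,...,nk) = K_{n1} □ K_{n2} □ ⋯ □ K_{nk} admits an interval coloring if the product n1·n2⋯nk is even, and does not admit an interval coloring if n1·n2⋯nk is odd (with each ni ≥ 2). -/

import Mathlib

open SimpleGraph

/-- `c` is an interval `t`-coloring of `G`: edges get colors in `{1,…,t}`, every color
`1,…,t` is used, adjacent edges get distinct colors, and the set of colors of edges
incident to any vertex is an interval of integers. -/
def IsIntervalColoring {V : Type*} (G : SimpleGraph V) (t : ℕ) (c : Sym2 V → ℕ) : Prop :=
  (∀ e ∈ G.edgeSet, 1 ≤ c e ∧ c e ≤ t) ∧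
  (∀ i, 1 ≤ i → i ≤ t → ∃ e ∈ G.edgeSet, c e = i) ∧
  (∀ v w₁ w₂, G.Adj v w₁ → G.Adj v w₂ → w₁ ≠ w₂ → c s(v, w₁) ≠ c s(v, w₂)) ∧
  (∀ v i j k, (∃ w, G.Adj v w ∧ c s(v, w) = i) → (∃ w, G.Adj v w ∧ c s(v, w) = k) →
    i ≤ j → j ≤ k → ∃ w, G.Adj v w ∧ c s(v, w) = j)

/-- `G` has an interval `t`-coloring. -/
def HasIntervalColoring {V : Type*} (G : SimpleGraph V) (t : ℕ) : Prop :=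
  ∃ c : Sym2 V → ℕ, IsIntervalColoring G t c

/-- `G` is interval colorable (`G ∈ 𝔑`). -/
def IntervalColorable {V : Type*} (G : SimpleGraph V) : Prop :=
  ∃ t : ℕ, 1 ≤ t ∧ HasIntervalColoring G t

/-- `w G`: the least number of colors in an interval coloring of `G`. -/
noncomputable def wNum {V : Type*} (G : SimpleGraph V) : ℕ :=
  sInf {t | HasIntervalColoring G t}

/-- `W G`: the greatest number of colors in an interval coloring of `G`. -/
noncomputable def WNum {V : Type*} (G : SimpleGraph V) : ℕ :=
  sSup {t | HasIntervalColoring G t}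

/-- `G` is `r`-regular: every vertex has exactly `r` neighbors. -/
def IsRegularGraph {V : Type*} (G : SimpleGraph V) (r : ℕ) : Prop :=
  ∀ v : V, (G.neighborSet v).ncard = r

/-- `c` is a proper edge coloring of `G` using colors `0,…,k-1`. -/
def IsProperEdgeColoring {V : Type*} (G : SimpleGraph V) (k : ℕ) (c : Sym2 V → ℕ) : Prop :=
  (∀ e ∈ G.edgeSet, c e < k) ∧
  (∀ v w₁ w₂, G.Adj v w₁ → G.Adj v w₂ → w₁ ≠ w₂ → c s(v, w₁) ≠ c s(v, w₂))

/-- The chromatic index `χ'(G)`. -/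
noncomputable def edgeChromaticNumber {V : Type*} (G : SimpleGraph V) : ℕ :=
  sInf {k | ∃ c : Sym2 V → ℕ, IsProperEdgeColoring G k c}

/-- `G` is 1-factorable: its edge set decomposes into perfect matchings. -/
def IsOneFactorable {V : Type*} (G : SimpleGraph V) : Prop :=
  ∃ (n : ℕ) (f : Fin n → SimpleGraph.Subgraph G),
    (∀ i, (f i).IsPerfectMatching) ∧
    (∀ e ∈ G.edgeSet, ∃! i, e ∈ (f i).edgeSet)

/-- The tensor (direct) product `G × H`. -/
def tensorProd {α β : Type*} (G : SimpleGraph α) (H : SimpleGraph β) :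
    SimpleGraph (α × β) where
  Adj p q := G.Adj p.1 q.1 ∧ H.Adj p.2 q.2
  symm := ⟨fun p q ⟨h₁, h₂⟩ => ⟨h₁.symm, h₂.symm⟩⟩
  loopless := ⟨fun p h => G.loopless.1 p.1 h.1⟩

/-- The strong tensor (semistrong) product `G ⊗ H`. -/
def strongTensorProd {α β : Type*} (G : SimpleGraph α) (H : SimpleGraph β) :
    SimpleGraph (α × β) where
  Adj p q := (G.Adj p.1 q.1 ∧ H.Adj p.2 q.2) ∨ (p.2 = q.2 ∧ G.Adj p.1 q.1)
  symm := ⟨fun p q h => by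
    rcases h with ⟨h₁, h₂⟩ | ⟨h₁, h₂⟩
    · exact Or.inl ⟨h₁.symm, h₂.symm⟩
    · exact Or.inr ⟨h₁.symm, h₂.symm⟩⟩
  loopless := ⟨fun p h => by
    rcases h with ⟨h₁, _⟩ | ⟨_, h₁⟩ <;> exact G.loopless.1 p.1 h₁⟩

/-- The strong product `G ⊠ H`. -/
def strongProd {α β : Type*} (G : SimpleGraph α) (H : SimpleGraph β) :
    SimpleGraph (α × β) where
  Adj p q := (G.Adj p.1 q.1 ∧ H.Adj p.2 q.2) ∨ (p.1 = q.1 ∧ H.Adj p.2 q.2) ∨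
    (p.2 = q.2 ∧ G.Adj p.1 q.1)
  symm := ⟨fun p q h => by
    rcases h with ⟨h₁, h₂⟩ | ⟨h₁, h₂⟩ | ⟨h₁, h₂⟩
    · exact Or.inl ⟨h₁.symm, h₂.symm⟩
    · exact Or.inr (Or.inl ⟨h₁.symm, h₂.symm⟩)
    · exact Or.inr (Or.inr ⟨h₁.symm, h₂.symm⟩)⟩
  loopless := ⟨fun p h => by
    rcases h with ⟨h₁, _⟩ | ⟨_, h₂⟩ | ⟨_, h₁⟩
    · exact G.loopless.1 p.1 h₁
    · exact H.loopless.1 p.2 h₂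
    · exact G.loopless.1 p.1 h₁⟩

/-- The lexicographic product (composition) `G[H]`. -/
def lexProd {α β : Type*} (G : SimpleGraph α) (H : SimpleGraph β) :
    SimpleGraph (α × β) where
  Adj p q := G.Adj p.1 q.1 ∨ (p.1 = q.1 ∧ H.Adj p.2 q.2)
  symm := ⟨fun p q h => by
    rcases h with h₁ | ⟨h₁, h₂⟩
    · exact Or.inl h₁.symm
    · exact Or.inr ⟨h₁.symm, h₂.symm⟩⟩
  loopless := ⟨fun p h => by
    rcases h with h₁ | ⟨_, h₂⟩
    · exact G.loopless.1 p.1 h₁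
    · exact H.loopless.1 p.2 h₂⟩

/-- The Hamming graph `H(n₁,…,n_k) = K_{n₁} □ ⋯ □ K_{n_k}`: vertices are tuples,
two tuples adjacent iff they differ in exactly one coordinate. -/
def hammingGraph (k : ℕ) (n : Fin k → ℕ) : SimpleGraph (∀ i, Fin (n i)) where
  Adj x y := ∃! i, x i ≠ y i
  symm := ⟨fun x y ⟨i, hi, hu⟩ => ⟨i, hi.symm, fun j hj => hu j hj.symm⟩⟩
  loopless := ⟨fun x ⟨_, hi, _⟩ => hi rfl⟩

/-!
If `n₁⋯n_k` is odd, every `nᵢ` is odd and the Hamming graph is `r`-regular with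
`r = ∑ (nᵢ - 1)`. In an interval coloring the `r` colors at a vertex are consecutive, so exactly
one of them is a multiple of `r`; the edges with such colors form a perfect matching, which
cannot exist on the odd number `n₁⋯n_k` of vertices.

If `n_J` is even, a proper edge coloring with `r` colors is an interval coloring, since every
vertex then sees all `r` colors. Color `K_n` by `a + b mod n`, so that vertex `a` misses `2a`;
for even `n`, join a new vertex to `K_{n-1}` by edges carrying these missing colors, which are
distinct because `n - 1` is odd. On `G □ H`, let the `G`-edges of one color take the missing
color of `H` at their `H`-coordinate and shift the other `G`-colors above those of `H`. Applied
with `G = K_{n_J}`, which misses no color, and `H` the Hamming graph of the other coordinates,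
built up in the same way, this leaves no color missing.
-/

lemma Set.BijOn.union_of_disjoint {α β : Type*} {f : α → β} {s₁ s₂ : Set α} {t₁ t₂ : Set β}
    (h₁ : Set.BijOn f s₁ t₁) (h₂ : Set.BijOn f s₂ t₂) (ht : Disjoint t₁ t₂) :
    Set.BijOn f (s₁ ∪ s₂) (t₁ ∪ t₂) := by
  refine h₁.union h₂ ?_
  have hcross {x y} (hx : x ∈ s₁) (hy : y ∈ s₂) : f x ≠ f y :=
    ht.ne_of_mem (h₁.mapsTo hx) (h₂.mapsTo hy)
  rintro x (hx | hx) y (hy | hy) hxy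
  exacts [h₁.injOn hx hy hxy, (hcross hx hy hxy).elim, (hcross hy hx hxy.symm).elim,
    h₂.injOn hx hy hxy]

lemma Fin.existsUnique_iff_succAbove {k : ℕ} {P : Fin (k + 1) → Prop} (i : Fin (k + 1)) :
    (∃! j, P j) ↔ (P i ∧ ∀ j, ¬ P (i.succAbove j)) ∨ (¬ P i ∧ ∃! j, P (i.succAbove j)) := by
  constructor
  · rintro ⟨j, hj, hu⟩
    obtain rfl | ⟨j, rfl⟩ := Fin.eq_self_or_eq_succAbove i j
    · exact Or.inl ⟨hj, fun l hl => Fin.succAbove_ne j l (hu _ hl)⟩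
    · exact Or.inr ⟨fun hi => Fin.succAbove_ne i j (hu i hi).symm,
        j, hj, fun l hl => Fin.succAbove_right_injective (hu _ hl)⟩
  · rintro (⟨hi, hno⟩ | ⟨hni, j, hj, hu⟩)
    · refine ⟨i, hi, fun l hl => ?_⟩
      obtain rfl | ⟨l, rfl⟩ := Fin.eq_self_or_eq_succAbove i l
      exacts [rfl, (hno l hl).elim]
    · refine ⟨i.succAbove j, hj, fun l hl => ?_⟩
      obtain rfl | ⟨l, rfl⟩ := Fin.eq_self_or_eq_succAbove i l
      exacts [(hni hl).elim, by rw [hu l hl]]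

lemma Fin.bijOn_val_add_self {N : ℕ} [NeZero N] (hN : Odd N) :
    Set.BijOn (fun a : Fin N => (a + a).val) Set.univ (Set.Iio N) := by
  have hinj : Function.Injective (fun a : Fin N => a + a) := by
    intro a b hab
    have hmod : 2 * a.val ≡ 2 * b.val [MOD N] := by
      rw [Nat.ModEq, two_mul, two_mul, ← Fin.val_add, ← Fin.val_add]
      exact congrArg Fin.val hab
    exact Fin.ext (Nat.ModEq.eq_of_lt_of_lt (Nat.ModEq.cancel_left_of_coprime
      hN.coprime_two_right hmod) a.isLt b.isLt)
  refine ⟨fun a _ => Set.mem_Iio.mpr (a + a).isLt, (Fin.val_injective.comp hinj).injOn,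
    fun j hj => ?_⟩
  obtain ⟨a, ha⟩ := (Finite.injective_iff_surjective.mp hinj) ⟨j, hj⟩
  exact ⟨a, trivial, congrArg Fin.val ha⟩

lemma Nat.existsUnique_dvd_mem_Ico (a : ℕ) {r : ℕ} (hr : 0 < r) :
    ∃! m, m ∈ Set.Ico a (a + r) ∧ r ∣ m := by
  have huniq {x y} (hx : x ∈ Set.Ico a (a + r)) (hy : y ∈ Set.Ico a (a + r)) (hrx : r ∣ x)
      (hry : r ∣ y) (hxy : x ≤ y) : x = y := by
    rw [Set.mem_Ico] at hx hy
    have := Nat.eq_zero_of_dvd_of_lt (Nat.dvd_sub hry hrx) (by omega)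
    omega
  have hmem : r * ((a + r - 1) / r) ∈ Set.Ico a (a + r) := by
    have := Nat.div_add_mod (a + r - 1) r
    have := Nat.mod_lt (a + r - 1) hr
    rw [Set.mem_Ico]
    omega
  refine ⟨_, ⟨hmem, dvd_mul_right _ _⟩, fun m ⟨hm, hrm⟩ => ?_⟩
  rcases le_total m (r * ((a + r - 1) / r)) with h | h
  exacts [huniq hm hmem hrm (dvd_mul_right _ _) h, (huniq hmem hm (dvd_mul_right _ _) hrm h).symm]

namespace SimpleGraph

variable {V W α β : Type*}

/-- `m v` is the color missing at `v`; a value `m v ≥ q` means that none is missing. -/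
def IsEdgeColoringAvoiding (G : SimpleGraph V) (q : ℕ) (c : Sym2 V → ℕ) (m : V → ℕ) : Prop :=
  ∀ v, Set.BijOn (fun w => c s(v, w)) (G.neighborSet v) (Set.Iio q \ {m v})

lemma IsEdgeColoringAvoiding.map {G : SimpleGraph V} {G' : SimpleGraph W} (e : G ≃g G')
    {q : ℕ} {c : Sym2 V → ℕ} {m : V → ℕ} (h : G.IsEdgeColoringAvoiding q c m) :
    G'.IsEdgeColoringAvoiding q (c ∘ Sym2.map e.symm) (m ∘ e.symm) := by
  intro v
  have he : Set.BijOn e.symm (G'.neighborSet v) (G.neighborSet (e.symm v)) := by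
    rw [← e.symm.image_neighborSet]
    exact e.symm.injective.injOn.bijOn_image
  exact (h (e.symm v)).comp he

lemma IsEdgeColoringAvoiding.bijOn_Iio {G : SimpleGraph V} {q : ℕ} {c : Sym2 V → ℕ}
    {m : V → ℕ} (h : G.IsEdgeColoringAvoiding q c m) (hm : ∀ v, q ≤ m v) (v : V) :
    Set.BijOn (fun w => c s(v, w)) (G.neighborSet v) (Set.Iio q) := by
  simpa [Set.sdiff_singleton_eq_self, hm v] using h v

lemma IsEdgeColoringAvoiding.isRegularGraph {G : SimpleGraph V} {q : ℕ} {c : Sym2 V → ℕ}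
    {m : V → ℕ} (h : G.IsEdgeColoringAvoiding q c m) (hm : ∀ v, m v < q) :
    IsRegularGraph G (q - 1) := by
  intro v
  rw [(h v).ncard_eq, Set.ncard_sdiff_singleton_of_mem (Set.mem_Iio.mpr (hm v)),
    Set.ncard_Iio_nat]

lemma isEdgeColoringAvoiding_completeGraph_fin (N : ℕ) [NeZero N] :
    (completeGraph (Fin N)).IsEdgeColoringAvoiding N
      (Sym2.lift ⟨fun a b => (a + b).val, fun a b => congrArg Fin.val (add_comm a b)⟩)
      (fun a => (a + a).val) := by
  intro a
  simp only [Sym2.lift_mk, neighborSet_top]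
  refine ⟨fun b hb => ?_, fun b _ b' _ hbb' => ?_, fun j hj => ?_⟩
  · simpa [Fin.val_eq_val, add_right_inj, eq_comm] using hb
  · simpa using Fin.val_injective hbb'
  · simp only [Set.mem_sdiff, Set.mem_Iio, Set.mem_singleton_iff] at hj
    refine ⟨⟨j, hj.1⟩ - a, ?_, by simp⟩
    simp only [Set.mem_compl_iff, Set.mem_singleton_iff, sub_eq_iff_eq_add]
    intro h
    exact hj.2 (by rw [← h])

def coneColoring (c : Sym2 V → ℕ) (m : V → ℕ) : Sym2 (Option V) → ℕ :=
  Sym2.lift ⟨fun x y => match x, y with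
    | some a, some b => c s(a, b)
    | some a, none => m a
    | none, some b => m b
    | none, none => 0, by rintro (_ | a) (_ | b) <;> simp [Sym2.eq_swap]⟩

lemma isEdgeColoringAvoiding_completeGraph_option {q : ℕ} {c : Sym2 V → ℕ} {m : V → ℕ}
    (hc : (completeGraph V).IsEdgeColoringAvoiding q c m)
    (hm : Set.BijOn m Set.univ (Set.Iio q)) :
    (completeGraph (Option V)).IsEdgeColoringAvoiding q (coneColoring c m) (fun _ => q) := by
  have hsome (f : Option V → ℕ) {s : Set V} {t : Set ℕ} (h : Set.BijOn (f ∘ some) s t) :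
      Set.BijOn f (some '' s) t :=
    (Set.bijOn_comp_iff (Option.some_injective V).injOn).mp h
  have hfull : Set.Iio q \ {q} = Set.Iio q := by simp
  rintro (_ | a)
  · rw [neighborSet_top, ← Set.compl_range_some, compl_compl, ← Set.image_univ, hfull]
    exact hsome (fun y => coneColoring c m s(none, y)) hm
  · have hins := (hsome (fun y => coneColoring c m s(some a, y)) (hc a)).insert
      (a := none) (by simp [coneColoring])
    have hnbr : insert none (some '' (completeGraph V).neighborSet a) =
        (completeGraph (Option V)).neighborSet (some a) := by
      ext (_ | b) <;> simp [eq_comm]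
    have hcol : insert (m a) (Set.Iio q \ {m a}) = Set.Iio q \ {q} := by
      rw [Set.insert_sdiff_singleton, Set.insert_eq_of_mem (hm.mapsTo (Set.mem_univ a)), hfull]
    rw [← hnbr, ← hcol]
    exact hins

lemma exists_isEdgeColoringAvoiding_completeGraph_of_even {n : ℕ} (hn : Even n) :
    ∃ c, (completeGraph (Fin n)).IsEdgeColoringAvoiding (n - 1) c (fun _ => n - 1) := by
  rcases n with _ | N
  · exact ⟨0, fun v => v.elim0⟩
  have hN : Odd N := Nat.not_even_iff_odd.mp (Nat.even_add_one.mp hn)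
  have : NeZero N := ⟨hN.pos.ne'⟩
  exact ⟨_, (isEdgeColoringAvoiding_completeGraph_option
    (isEdgeColoringAvoiding_completeGraph_fin N) (Fin.bijOn_val_add_self hN)).map
      (Iso.completeGraph (finSuccEquiv N).symm)⟩

def boxProdColoring [DecidableEq β] (p q : ℕ) (cG : Sym2 α → ℕ) (cH : Sym2 β → ℕ)
    (mH : β → ℕ) : Sym2 (α × β) → ℕ :=
  Sym2.lift ⟨fun x y => if x.2 = y.2 then
      (if cG s(x.1, y.1) = p then mH x.2 else q + cG s(x.1, y.1))
    else cH s(x.2, y.2), fun x y => by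
      by_cases h : x.2 = y.2 <;> simp [h, eq_comm, Sym2.eq_swap]⟩

lemma IsEdgeColoringAvoiding.boxProd [DecidableEq β] {G : SimpleGraph α} {H : SimpleGraph β}
    {p q : ℕ} {cG : Sym2 α → ℕ} {cH : Sym2 β → ℕ} {mG : α → ℕ} {mH : β → ℕ}
    (hG : G.IsEdgeColoringAvoiding (p + 1) cG mG) (hH : H.IsEdgeColoringAvoiding q cH mH) (hmH : ∀ v, mH v < q) :
    (G □ H).IsEdgeColoringAvoiding (p + q) (boxProdColoring p q cG cH mH)
      (fun x => if mG x.1 = p then mH x.2 else q + mG x.1) := by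
  rintro ⟨u, v⟩
  set g : ℕ → ℕ := fun c => if c = p then mH v else q + c
  have hg : Set.InjOn g (Set.Iio (p + 1) \ {mG u}) := by
    intro c hc c' hc' hcc'
    have := hmH v
    simp only [g] at hcc'
    split_ifs at hcc' <;> omega
  have hGpart : Set.BijOn (fun w => boxProdColoring p q cG cH mH s((u, v), w))
      ((·, v) '' G.neighborSet u) (g '' (Set.Iio (p + 1) \ {mG u})) := by
    refine (Set.bijOn_comp_iff (fun _ _ _ _ h => (Prod.mk.inj h).1)).mp ?_
    exact (hg.bijOn_image.comp (hG u)).congr fun u' _ => by simp [boxProdColoring, g]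
  have hHpart : Set.BijOn (fun w => boxProdColoring p q cG cH mH s((u, v), w))
      ((u, ·) '' H.neighborSet v) (Set.Iio q \ {mH v}) := by
    refine (Set.bijOn_comp_iff (fun _ _ _ _ h => (Prod.mk.inj h).2)).mp ?_
    exact (hH v).congr fun v' hv' => by simp [boxProdColoring, H.ne_of_adj hv']
  have hdisj : Disjoint (g '' (Set.Iio (p + 1) \ {mG u})) (Set.Iio q \ {mH v}) := by
    rw [Set.disjoint_left]
    rintro _ ⟨c, hc, rfl⟩ ⟨hlt, hne⟩
    simp only [g, Set.mem_singleton_iff, Set.mem_Iio] at hc hlt hne ⊢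
    split_ifs at hlt hne <;> omega
  have htarget : g '' (Set.Iio (p + 1) \ {mG u}) ∪ (Set.Iio q \ {mH v}) =
      Set.Iio (p + q) \ {if mG u = p then mH v else q + mG u} := by
    have := hmH v
    ext j
    simp only [g, Set.mem_union, Set.mem_image, Set.mem_sdiff, Set.mem_Iio,
      Set.mem_singleton_iff]
    constructor
    · rintro (⟨c, ⟨hc, hcm⟩, rfl⟩ | ⟨hj, hjm⟩) <;> split_ifs <;> omega
    · rintro ⟨hj, hjm⟩
      by_cases hjq : j < q
      · by_cases hjv : j = mH v
        · refine Or.inl ⟨p, ⟨by omega, fun h => ?_⟩, by simp [hjv]⟩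
          simp [h, hjv] at hjm
        · exact Or.inr ⟨hjq, hjv⟩
      · refine Or.inl ⟨j - q, ⟨by omega, fun h => hjm ?_⟩, by split_ifs <;> omega⟩
        split_ifs <;> omega
  rw [neighborSet_boxProd, Set.prod_singleton, Set.singleton_prod, ← htarget]
  exact hGpart.union_of_disjoint hHpart hdisj

end SimpleGraph

section IntervalColoring

variable {V : Type*} {G : SimpleGraph V}

lemma IsIntervalColoring.injOn_neighborSet {t : ℕ} {c : Sym2 V → ℕ}
    (hc : IsIntervalColoring G t c) (v : V) :
    Set.InjOn (fun w => c s(v, w)) (G.neighborSet v) :=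
  fun _ h₁ _ h₂ h => by_contra fun hne => hc.2.2.1 v _ _ h₁ h₂ hne h

lemma IsIntervalColoring.image_neighborSet_eq_Ico {t : ℕ} {c : Sym2 V → ℕ}
    (hc : IsIntervalColoring G t c) {v : V} (hfin : (G.neighborSet v).Finite) {r : ℕ}
    (hr : (G.neighborSet v).ncard = r) (hr0 : 0 < r) :
    ∃ a, (fun w => c s(v, w)) '' G.neighborSet v = Set.Ico a (a + r) := by
  set P := (fun w => c s(v, w)) '' G.neighborSet v
  have hPcard : P.ncard = r := by rw [(hc.injOn_neighborSet v).ncard_image, hr]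
  have hPbdd : BddAbove P := (hfin.image _).bddAbove
  have hPne : P.Nonempty := Set.nonempty_of_ncard_ne_zero (by omega)
  have hP : P = Set.Icc (sInf P) (sSup P) := by
    refine Set.Subset.antisymm (fun j hj => ⟨Nat.sInf_le hj, le_csSup hPbdd hj⟩) ?_
    rintro j ⟨h₁, h₂⟩
    obtain ⟨w₁, hw₁, e₁⟩ := Nat.sInf_mem hPne
    obtain ⟨w₂, hw₂, e₂⟩ := Nat.sSup_mem hPne hPbdd
    exact hc.2.2.2 v _ j _ ⟨w₁, hw₁, e₁⟩ ⟨w₂, hw₂, e₂⟩ h₁ h₂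
  have hlen : sSup P + 1 - sInf P = r := by rw [← Set.ncard_Icc_nat, ← hP, hPcard]
  refine ⟨sInf P, hP.trans (Set.ext fun j => ?_)⟩
  simp only [Set.mem_Icc, Set.mem_Ico]
  omega

lemma IsIntervalColoring.existsUnique_adj_dvd {t : ℕ} {c : Sym2 V → ℕ}
    (hc : IsIntervalColoring G t c) {v : V} (hfin : (G.neighborSet v).Finite) {r : ℕ}
    (hr : (G.neighborSet v).ncard = r) (hr0 : 0 < r) :
    ∃! w, G.Adj v w ∧ r ∣ c s(v, w) := by
  obtain ⟨a, ha⟩ := hc.image_neighborSet_eq_Ico hfin hr hr0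
  obtain ⟨_, ⟨hm, hrm⟩, hu⟩ := Nat.existsUnique_dvd_mem_Ico a hr0
  rw [← ha] at hm
  obtain ⟨w, hw, rfl⟩ := hm
  refine ⟨w, ⟨hw, hrm⟩, fun w' ⟨hw', hrw'⟩ => hc.injOn_neighborSet v hw' hw (hu _ ⟨?_, hrw'⟩)⟩
  exact ha ▸ Set.mem_image_of_mem _ hw'

theorem even_card_of_isRegularGraph_of_intervalColorable [Fintype V] {r : ℕ}
    (hG : IsRegularGraph G r) (h : IntervalColorable G) : Even (Fintype.card V) := by
  obtain ⟨t, ht, c, hc⟩ := h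
  have hr : 0 < r := by
    obtain ⟨e, he, -⟩ := hc.2.1 1 le_rfl ht
    induction e using Sym2.ind with
    | _ v w => exact hG v ▸ (Set.ncard_pos (Set.toFinite _)).mpr ⟨w, he⟩
  let M : SimpleGraph V :=
    { Adj v w := G.Adj v w ∧ r ∣ c s(v, w)
      symm := ⟨fun v w h => ⟨h.1.symm, Sym2.eq_swap (a := v) ▸ h.2⟩⟩
      loopless := ⟨fun v h => G.loopless.1 v h.1⟩ }
  have hM : (toSubgraph (G := G) M fun _ _ h => h.1).IsPerfectMatching :=
    Subgraph.isPerfectMatching_iff.mpr fun v =>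
      hc.existsUnique_adj_dvd (Set.toFinite _) (hG v) hr
  exact hM.even_card

lemma intervalColorable_of_bijOn [Nonempty V] {t : ℕ} (ht : 1 ≤ t) {c : Sym2 V → ℕ}
    (hc : ∀ v, Set.BijOn (fun w => c s(v, w)) (G.neighborSet v) (Set.Iio t)) :
    IntervalColorable G := by
  have hcolor {v i} (h1 : 1 ≤ i) (ht : i ≤ t) : ∃ w, G.Adj v w ∧ c s(v, w) + 1 = i := by
    obtain ⟨w, hw, hcw⟩ := (hc v).surjOn (show i - 1 ∈ Set.Iio t by simp; omega)
    exact ⟨w, hw, by simp only at hcw; omega⟩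
  refine ⟨t, ht, fun e => c e + 1, fun e he => ?_, fun i h1 ht => ?_, ?_, ?_⟩
  · induction e using Sym2.ind with
    | _ v w =>
      have : c s(v, w) < t := (hc v).mapsTo he
      dsimp only
      omega
  · obtain ⟨w, hw, hcw⟩ := hcolor (v := Classical.arbitrary V) h1 ht
    exact ⟨_, hw, hcw⟩
  · intro v w₁ w₂ h₁ h₂ hne hc₁₂
    exact hne ((hc v).injOn h₁ h₂ (Nat.add_right_cancel hc₁₂))
  · rintro v i j k ⟨w₁, -, rfl⟩ ⟨w₂, h₂, rfl⟩ hij hjk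
    have : c s(v, w₂) < t := (hc v).mapsTo h₂
    dsimp only at hij hjk ⊢
    exact hcolor (by omega) (by omega)

end IntervalColoring

@[simp]
lemma hammingGraph_adj {k : ℕ} {n : Fin k → ℕ} {x y : ∀ i, Fin (n i)} :
    (hammingGraph k n).Adj x y ↔ ∃! i, x i ≠ y i := Iff.rfl

def hammingGraphIsoBoxProd {k : ℕ} (n : Fin (k + 1) → ℕ) (i : Fin (k + 1)) :
    hammingGraph (k + 1) n ≃g
      completeGraph (Fin (n i)) □ hammingGraph k (fun j => n (i.succAbove j)) where
  toEquiv := (Fin.insertNthEquiv (fun j => Fin (n j)) i).symm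
  map_rel_iff' {x y} := by
    simp [boxProd_adj, Fin.existsUnique_iff_succAbove i, funext_iff, Fin.removeNth, and_comm]

lemma hammingGraph_exists_isEdgeColoringAvoiding {k : ℕ} (n : Fin k → ℕ) (hn : ∀ i, n i ≠ 0) :
    ∃ c m, (hammingGraph k n).IsEdgeColoringAvoiding (∑ i, (n i - 1) + 1) c m ∧
      ∀ v, m v < ∑ i, (n i - 1) + 1 := by
  induction k with
  | zero =>
    exact ⟨0, 0, fun v => by simp, fun v => Nat.one_pos⟩
  | succ k ih =>
    obtain ⟨cH, mH, hH, hmH⟩ := ih (fun j => n (Fin.succAbove 0 j)) fun j => hn _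
    have : NeZero (n 0) := ⟨hn 0⟩
    obtain ⟨cG, mG, hG, hmG⟩ : ∃ c m, (completeGraph (Fin (n 0))).IsEdgeColoringAvoiding
        (n 0 - 1 + 1) c m ∧ ∀ a, m a < n 0 - 1 + 1 := by
      rw [Nat.sub_add_cancel (Nat.one_le_iff_ne_zero.mpr (hn 0))]
      exact ⟨_, _, isEdgeColoringAvoiding_completeGraph_fin (n 0), fun a => (a + a).isLt⟩
    have hsum : ∑ i, (n i - 1) + 1 = n 0 - 1 + (∑ j, (n (Fin.succAbove 0 j) - 1) + 1) := by
      rw [Fin.sum_univ_succAbove _ 0]; ring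
    rw [hsum]
    refine ⟨_, _, (hG.boxProd hH hmH).map (hammingGraphIsoBoxProd n 0).symm, fun v => ?_⟩
    rw [Function.comp_apply]
    generalize (hammingGraphIsoBoxProd n 0).symm.symm v = x
    have := hmG x.1
    have := hmH x.2
    split_ifs <;> omega

lemma hammingGraph_isRegularGraph {k : ℕ} (n : Fin k → ℕ) (hn : ∀ i, n i ≠ 0) :
    IsRegularGraph (hammingGraph k n) (∑ i, (n i - 1)) := by
  obtain ⟨c, m, h, hm⟩ := hammingGraph_exists_isEdgeColoringAvoiding n hn
  simpa using h.isRegularGraph hm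

lemma hammingGraph_exists_bijOn_of_even {k : ℕ} (n : Fin k → ℕ) (hn : ∀ i, n i ≠ 0)
    {J : Fin k} (hJ : Even (n J)) : ∃ c : Sym2 (∀ i, Fin (n i)) → ℕ, ∀ v, Set.BijOn
      (fun w => c s(v, w)) ((hammingGraph k n).neighborSet v) (Set.Iio (∑ i, (n i - 1))) := by
  rcases k with _ | k
  · exact J.elim0
  obtain ⟨cH, mH, hH, hmH⟩ :=
    hammingGraph_exists_isEdgeColoringAvoiding (fun j => n (J.succAbove j)) fun j => hn _
  have hJ2 : 2 ≤ n J := by obtain ⟨r, hr⟩ := hJ; have := hn J; omega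
  obtain ⟨cG, hG⟩ : ∃ c, (completeGraph (Fin (n J))).IsEdgeColoringAvoiding (n J - 2 + 1) c
      (fun _ => n J - 2 + 1) := by
    rw [show n J - 2 + 1 = n J - 1 by omega]
    exact exists_isEdgeColoringAvoiding_completeGraph_of_even hJ
  have hsum : ∑ i, (n i - 1) = n J - 2 + (∑ j, (n (J.succAbove j) - 1) + 1) := by
    rw [Fin.sum_univ_succAbove _ J]; omega
  rw [hsum]
  refine ⟨_, ((hG.boxProd hH hmH).map (hammingGraphIsoBoxProd n J).symm).bijOn_Iio fun v => ?_⟩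
  simp only [Function.comp_apply]
  split_ifs <;> omega

/-- The Hamming graph is interval colorable iff `n₁·n₂⋯n_k` is even. -/
theorem hamming_interval_colorable (k : ℕ) (n : Fin k → ℕ) (hn : ∀ i, 2 ≤ n i) :
    (Even (∏ i, n i) → IntervalColorable (hammingGraph k n)) ∧
    (Odd (∏ i, n i) → ¬ IntervalColorable (hammingGraph k n)) := by
  have hn0 (i : Fin k) : n i ≠ 0 := by have := hn i; omega
  constructor
  · intro heven
    obtain ⟨J, -, hJ⟩ :=
      (Nat.prime_two.prime.dvd_finsetProd_iff _).mp (even_iff_two_dvd.mp heven)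
    obtain ⟨c, hc⟩ := hammingGraph_exists_bijOn_of_even n hn0 (even_iff_two_dvd.mpr hJ)
    have hr : 1 ≤ ∑ i, (n i - 1) := calc
      1 ≤ n J - 1 := by have := hn J; omega
      _ ≤ ∑ i, (n i - 1) :=
        Finset.single_le_sum (f := fun i => n i - 1) (fun i _ => Nat.zero_le _) (Finset.mem_univ J)
    have : Nonempty (∀ i, Fin (n i)) := ⟨fun i => ⟨0, Nat.pos_of_ne_zero (hn0 i)⟩⟩
    exact intervalColorable_of_bijOn hr hc
  · intro hodd hcol
    have hcard := even_card_of_isRegularGraph_of_intervalColorable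
      (hammingGraph_isRegularGraph n hn0) hcol
    simp only [Fintype.card_pi, Fintype.card_fin] at hcard
    exact Nat.not_even_iff_odd.mpr hodd hcard
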